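/- arXiv:2604.09642 — 6 statements merged into one kernel-verified Lean document; each statement's English description precedes it below -/
import Mathlib

section
/- Let D ⊂ ℝ^N be a bounded strictly convex domain with smooth boundary, and let x, z ∉ closure(D). Define ψ(y) = ‖x−y‖ + ‖y−z‖ for y ∈ ∂D. If y⁺ ∈ ∂D is a stationary point of ψ (the surface gradient of ψ vanishes at y⁺) lying in the illuminated side ∂D⁺_{x,z} = {y ∈ ∂D : n(y)·(y−x) < 0 and n(y)·(y−z) < 0}, then the open solid ellipsoid E⁺ = {y ∈ ℝ^N : ‖y−x‖ + ‖y−z‖ < ψ(y⁺)} is disjoint from closure(D). -/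
open scoped RealInnerProductSpace
open Metric

/-- If `y⁺` is a stationary point of `ψ(y) = ‖x−y‖ + ‖y−z‖` lying in the illuminated
side of the boundary of a bounded strictly convex smooth domain `D`, then the open
solid ellipsoid `{y : ‖y−x‖ + ‖y−z‖ < ψ(y⁺)}` is disjoint from `closure D`. -/
theorem ellipsoid_disjoint_of_stationary_illuminated
    (N : ℕ) (D : Set (EuclideanSpace ℝ (Fin N)))
    (hD_open : IsOpen D) (hD_bdd : Bornology.IsBounded D)
    (hD_conv : StrictConvex ℝ D)
    (n : EuclideanSpace ℝ (Fin N) → EuclideanSpace ℝ (Fin N))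
    (hn_unit : ∀ y ∈ frontier D, ‖n y‖ = 1)
    (hn_support : ∀ y ∈ frontier D, ∀ w ∈ closure D, ⟪w - y, n y⟫ ≤ 0)
    (x z : EuclideanSpace ℝ (Fin N))
    (hx : x ∉ closure D) (hz : z ∉ closure D)
    (yp : EuclideanSpace ℝ (Fin N)) (hyp : yp ∈ frontier D)
    (hill_x : ⟪n yp, yp - x⟫ < 0) (hill_z : ⟪n yp, yp - z⟫ < 0)
    (hstat : ∃ c : ℝ, ‖yp - x‖⁻¹ • (yp - x) + ‖yp - z‖⁻¹ • (yp - z) = c • n yp) :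
    {y : EuclideanSpace ℝ (Fin N) | ‖y - x‖ + ‖y - z‖ < ‖x - yp‖ + ‖yp - z‖}
      ∩ closure D = ∅ := by
  ext w
  simp only [Set.mem_inter_iff, Set.mem_setOf_eq, Set.mem_empty_iff_false, iff_false, not_and]
  intro hw hwD
  have hypc : yp ∈ closure D := frontier_subset_closure hyp
  have hxne : yp - x ≠ 0 := sub_ne_zero.2 (fun h => hx (h ▸ hypc))
  have hzne : yp - z ≠ 0 := sub_ne_zero.2 (fun h => hz (h ▸ hypc))
  set a := ‖yp - x‖ with ha
  set b := ‖yp - z‖ with hb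
  have ha0 : 0 < a := norm_pos_iff.2 hxne
  have hb0 : 0 < b := norm_pos_iff.2 hzne
  obtain ⟨c, hc⟩ := hstat
  set u := a⁻¹ • (yp - x) with hu
  set v := b⁻¹ • (yp - z) with hv
  have hun : ‖n yp‖ = 1 := hn_unit yp hyp
  have hnu : ‖u‖ = 1 := by
    rw [hu, norm_smul, norm_inv, norm_norm, ← ha, inv_mul_cancel₀ ha0.ne']
  have hnv : ‖v‖ = 1 := by
    rw [hv, norm_smul, norm_inv, norm_norm, ← hb, inv_mul_cancel₀ hb0.ne']
  -- value of c
  have hcval : c = a⁻¹ * ⟪yp - x, n yp⟫ + b⁻¹ * ⟪yp - z, n yp⟫ := by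
    have h := congrArg (fun t => (⟪t, n yp⟫ : ℝ)) hc
    simp only [hu, hv, inner_add_left, real_inner_smul_left] at h
    rw [real_inner_self_eq_norm_sq, hun] at h
    simpa using h.symm
  have hcneg : c < 0 := by
    rw [hcval]
    have h1 : ⟪yp - x, n yp⟫ < 0 := by rw [real_inner_comm]; exact hill_x
    have h2 : ⟪yp - z, n yp⟫ < 0 := by rw [real_inner_comm]; exact hill_z
    have := inv_pos.2 ha0
    have := inv_pos.2 hb0
    nlinarith
  -- inner product decompositions
  have e1 : ⟪u, w - x⟫ = ⟪u, w - yp⟫ + a := by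
    have hd : w - x = (w - yp) + (yp - x) := by abel
    rw [hd, inner_add_right]
    congr 1
    rw [hu, real_inner_smul_left, real_inner_self_eq_norm_sq, ← ha, sq]
    field_simp
  have e2 : ⟪v, w - z⟫ = ⟪v, w - yp⟫ + b := by
    have hd : w - z = (w - yp) + (yp - z) := by abel
    rw [hd, inner_add_right]
    congr 1
    rw [hv, real_inner_smul_left, real_inner_self_eq_norm_sq, ← hb, sq]
    field_simp
  -- Cauchy-Schwarz bounds
  have cs1 : ⟪u, w - x⟫ ≤ ‖w - x‖ := by
    have := real_inner_le_norm u (w - x)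
    rwa [hnu, one_mul] at this
  have cs2 : ⟪v, w - z⟫ ≤ ‖w - z‖ := by
    have := real_inner_le_norm v (w - z)
    rwa [hnv, one_mul] at this
  -- stationary identity applied to w - yp
  have e3 : ⟪u, w - yp⟫ + ⟪v, w - yp⟫ = c * ⟪n yp, w - yp⟫ := by
    have h := congrArg (fun t => (⟪t, w - yp⟫ : ℝ)) hc
    simp only [inner_add_left, real_inner_smul_left] at h
    exact h
  have hsup : ⟪n yp, w - yp⟫ ≤ 0 := by
    rw [real_inner_comm]; exact hn_support yp hyp w hwD
  have hpos : 0 ≤ c * ⟪n yp, w - yp⟫ := by nlinarith [mul_nonneg (neg_nonneg.2 hcneg.le) (neg_nonneg.2 hsup)]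
  have hxyp : ‖x - yp‖ = a := by rw [ha, norm_sub_rev]
  rw [hxyp] at hw
  linarith [e1 ▸ cs1, e2 ▸ cs2]
end

section
/- Let D ⊂ ℝ^N be a bounded strictly convex domain with smooth boundary and x, z ∉ closure(D). If the illuminated side ∂D⁺_{x,z} = {y ∈ ∂D : n(y)·(y−x) < 0 and n(y)·(y−z) < 0} is nonempty, then there is at most one stationary point of ψ(y) = ‖x−y‖ + ‖y−z‖ in ∂D⁺_{x,z}. -/
open scoped RealInnerProductSpace
open Metric

/-- A stationary point on the illuminated side minimizes `ψ` over `closure D`. -/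
lemma stationary_point_min_aux
    (N : ℕ) (D : Set (EuclideanSpace ℝ (Fin N)))
    (n : EuclideanSpace ℝ (Fin N) → EuclideanSpace ℝ (Fin N))
    (hn_unit : ∀ y ∈ frontier D, ‖n y‖ = 1)
    (hn_support : ∀ y ∈ frontier D, ∀ w ∈ closure D, ⟪w - y, n y⟫ ≤ 0)
    (x z : EuclideanSpace ℝ (Fin N))
    (hx : x ∉ closure D) (hz : z ∉ closure D)
    (y : EuclideanSpace ℝ (Fin N)) (hy : y ∈ frontier D)
    (hill : ⟪n y, y - x⟫ < 0 ∧ ⟪n y, y - z⟫ < 0)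
    (hstat : ∃ c : ℝ, ‖y - x‖⁻¹ • (y - x) + ‖y - z‖⁻¹ • (y - z) = c • n y)
    (w : EuclideanSpace ℝ (Fin N)) (hw : w ∈ closure D) :
    ‖y - x‖ + ‖y - z‖ ≤ ‖w - x‖ + ‖w - z‖ := by
  obtain ⟨c, hc⟩ := hstat
  have hyc : y ∈ closure D := frontier_subset_closure hy
  have hax : y - x ≠ 0 := sub_ne_zero.mpr (fun h => hx (h ▸ hyc))
  have haz : y - z ≠ 0 := sub_ne_zero.mpr (fun h => hz (h ▸ hyc))
  have hnx : (0:ℝ) < ‖y - x‖ := norm_pos_iff.mpr hax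
  have hnz : (0:ℝ) < ‖y - z‖ := norm_pos_iff.mpr haz
  -- c < 0
  have hcval : ⟪‖y - x‖⁻¹ • (y - x) + ‖y - z‖⁻¹ • (y - z), n y⟫
      = ‖y - x‖⁻¹ * ⟪y - x, n y⟫ + ‖y - z‖⁻¹ * ⟪y - z, n y⟫ := by
    rw [inner_add_left, real_inner_smul_left, real_inner_smul_left]
  have hsym1 : ⟪y - x, n y⟫ < 0 := by rw [real_inner_comm]; exact hill.1
  have hsym2 : ⟪y - z, n y⟫ < 0 := by rw [real_inner_comm]; exact hill.2
  have hcright : ⟪(c • n y : EuclideanSpace ℝ (Fin N)), n y⟫ = c := by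
    rw [real_inner_smul_left, real_inner_self_eq_norm_sq, hn_unit y hy]
    ring
  have hcneg : c < 0 := by
    have := hcval
    rw [hc, hcright] at this
    have h1 : ‖y - x‖⁻¹ * ⟪y - x, n y⟫ < 0 :=
      mul_neg_of_pos_of_neg (inv_pos.mpr hnx) hsym1
    have h2 : ‖y - z‖⁻¹ * ⟪y - z, n y⟫ < 0 :=
      mul_neg_of_pos_of_neg (inv_pos.mpr hnz) hsym2
    linarith
  -- convexity inequality for each norm term
  have key : ∀ p : EuclideanSpace ℝ (Fin N), p ∉ closure D →
      ‖y - p‖ + ‖y - p‖⁻¹ * ⟪y - p, w - y⟫ ≤ ‖w - p‖ := by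
    intro p hp
    have hap : y - p ≠ 0 := sub_ne_zero.mpr (fun h => hp (h ▸ hyc))
    have hnp : (0:ℝ) < ‖y - p‖ := norm_pos_iff.mpr hap
    have hcs : ⟪y - p, w - p⟫ ≤ ‖y - p‖ * ‖w - p‖ := real_inner_le_norm _ _
    have hsplit : ⟪y - p, w - p⟫ = ⟪y - p, w - y⟫ + ‖y - p‖ ^ 2 := by
      have : (w : EuclideanSpace ℝ (Fin N)) - p = (w - y) + (y - p) := by abel
      rw [this, inner_add_right, real_inner_self_eq_norm_sq]
    rw [hsplit] at hcs
    have hinv : ‖y - p‖⁻¹ * ‖y - p‖ = 1 := inv_mul_cancel₀ (ne_of_gt hnp)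
    have h2 : ‖y - p‖⁻¹ * (⟪y - p, w - y⟫ + ‖y - p‖ ^ 2) ≤ ‖y - p‖⁻¹ * (‖y - p‖ * ‖w - p‖) :=
      mul_le_mul_of_nonneg_left hcs (le_of_lt (inv_pos.mpr hnp))
    have h3 : ‖y - p‖⁻¹ * (‖y - p‖ * ‖w - p‖) = ‖w - p‖ := by
      rw [← mul_assoc, hinv, one_mul]
    have h4 : ‖y - p‖⁻¹ * ‖y - p‖ ^ 2 = ‖y - p‖ := by
      rw [sq, ← mul_assoc, hinv, one_mul]
    rw [mul_add, h3, h4] at h2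
    linarith
  have hx' := key x hx
  have hz' := key z hz
  -- gradient term is nonnegative
  have hsupp : ⟪w - y, n y⟫ ≤ 0 := hn_support y hy w hw
  have hgrad : ‖y - x‖⁻¹ * ⟪y - x, w - y⟫ + ‖y - z‖⁻¹ * ⟪y - z, w - y⟫
      = c * ⟪n y, w - y⟫ := by
    rw [← real_inner_smul_left, ← real_inner_smul_left, ← inner_add_left, hc,
      real_inner_smul_left]
  have hsupp' : ⟪n y, w - y⟫ ≤ 0 := by rw [real_inner_comm]; exact hsupp
  have hge : (0:ℝ) ≤ c * ⟪n y, w - y⟫ := by nlinarith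
  linarith [hx', hz', hgrad ▸ hge]

/-- There is at most one stationary point of `ψ(y) = ‖x−y‖ + ‖y−z‖` in the illuminated
side `∂D⁺_{x,z}` of a bounded strictly convex smooth domain. -/
theorem stationary_point_unique_on_illuminated_side
    (N : ℕ) (D : Set (EuclideanSpace ℝ (Fin N)))
    (hD_open : IsOpen D) (hD_bdd : Bornology.IsBounded D)
    (hD_conv : StrictConvex ℝ D)
    (n : EuclideanSpace ℝ (Fin N) → EuclideanSpace ℝ (Fin N))
    (hn_unit : ∀ y ∈ frontier D, ‖n y‖ = 1)
    (hn_support : ∀ y ∈ frontier D, ∀ w ∈ closure D, ⟪w - y, n y⟫ ≤ 0)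
    (x z : EuclideanSpace ℝ (Fin N))
    (hx : x ∉ closure D) (hz : z ∉ closure D)
    (hne : ∃ y ∈ frontier D, ⟪n y, y - x⟫ < 0 ∧ ⟪n y, y - z⟫ < 0)
    (y₁ y₂ : EuclideanSpace ℝ (Fin N))
    (hy₁ : y₁ ∈ frontier D) (hy₂ : y₂ ∈ frontier D)
    (hill₁ : ⟪n y₁, y₁ - x⟫ < 0 ∧ ⟪n y₁, y₁ - z⟫ < 0)
    (hill₂ : ⟪n y₂, y₂ - x⟫ < 0 ∧ ⟪n y₂, y₂ - z⟫ < 0)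
    (hstat₁ : ∃ c : ℝ, ‖y₁ - x‖⁻¹ • (y₁ - x) + ‖y₁ - z‖⁻¹ • (y₁ - z) = c • n y₁)
    (hstat₂ : ∃ c : ℝ, ‖y₂ - x‖⁻¹ • (y₂ - x) + ‖y₂ - z‖⁻¹ • (y₂ - z) = c • n y₂) :
    y₁ = y₂ := by
  have hy₁c : y₁ ∈ closure D := frontier_subset_closure hy₁
  have hy₂c : y₂ ∈ closure D := frontier_subset_closure hy₂
  have hmin₁ := stationary_point_min_aux N D n hn_unit hn_support x z hx hz y₁ hy₁ hill₁ hstat₁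
  have hmin₂ := stationary_point_min_aux N D n hn_unit hn_support x z hx hz y₂ hy₂ hill₂ hstat₂
  have hs : ‖y₁ - x‖ + ‖y₁ - z‖ = ‖y₂ - x‖ + ‖y₂ - z‖ :=
    le_antisymm (hmin₁ y₂ hy₂c) (hmin₂ y₁ hy₁c)
  -- midpoint
  set m : EuclideanSpace ℝ (Fin N) := (1/2 : ℝ) • y₁ + (1/2 : ℝ) • y₂ with hm_def
  have hmcl : m ∈ closure D :=
    hD_conv.convex.closure hy₁c hy₂c (by norm_num) (by norm_num) (by norm_num)
  have hhalf : ‖(1/2 : ℝ)‖ = 1/2 := by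
    rw [Real.norm_eq_abs]; norm_num
  have hmx : m - x = (1/2 : ℝ) • ((y₁ - x) + (y₂ - x)) := by
    rw [hm_def]; module
  have hmz : m - z = (1/2 : ℝ) • ((y₁ - z) + (y₂ - z)) := by
    rw [hm_def]; module
  have hbx : ‖m - x‖ ≤ (1/2 : ℝ) * (‖y₁ - x‖ + ‖y₂ - x‖) := by
    rw [hmx, norm_smul, hhalf]
    have := norm_add_le (y₁ - x) (y₂ - x)
    linarith
  have hbz : ‖m - z‖ ≤ (1/2 : ℝ) * (‖y₁ - z‖ + ‖y₂ - z‖) := by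
    rw [hmz, norm_smul, hhalf]
    have := norm_add_le (y₁ - z) (y₂ - z)
    linarith
  have hmge : ‖y₁ - x‖ + ‖y₁ - z‖ ≤ ‖m - x‖ + ‖m - z‖ := hmin₁ m hmcl
  -- equality in both triangle inequalities
  have heqx : ‖(y₁ - x) + (y₂ - x)‖ = ‖y₁ - x‖ + ‖y₂ - x‖ := by
    have h1 : ‖m - x‖ = (1/2 : ℝ) * ‖(y₁ - x) + (y₂ - x)‖ := by
      rw [hmx, norm_smul, hhalf]
    have h2 : ‖m - z‖ = (1/2 : ℝ) * ‖(y₁ - z) + (y₂ - z)‖ := by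
      rw [hmz, norm_smul, hhalf]
    have := norm_add_le (y₁ - x) (y₂ - x)
    have := norm_add_le (y₁ - z) (y₂ - z)
    linarith [hmge, hbz, h1 ▸ hbx]
  -- same ray
  have hax₁ : y₁ - x ≠ 0 := sub_ne_zero.mpr (fun h => hx (h ▸ hy₁c))
  have hax₂ : y₂ - x ≠ 0 := sub_ne_zero.mpr (fun h => hx (h ▸ hy₂c))
  have hray : SameRay ℝ (y₁ - x) (y₂ - x) := by
    rw [sameRay_iff_norm_add]; exact heqx
  obtain ⟨r, s, hr, hsp, hrs⟩ := hray.exists_pos hax₁ hax₂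
  -- a₂ = (r/s) • a₁
  have ha₂ : y₂ - x = (r / s) • (y₁ - x) := by
    have h : s⁻¹ • (r • (y₁ - x)) = s⁻¹ • (s • (y₂ - x)) := by rw [hrs]
    rw [smul_smul, smul_smul, inv_mul_cancel₀ (ne_of_gt hsp), one_smul] at h
    rw [div_eq_mul_inv, mul_comm]; exact h.symm
  have ha₁ : y₁ - x = (s / r) • (y₂ - x) := by
    have h : r⁻¹ • (r • (y₁ - x)) = r⁻¹ • (s • (y₂ - x)) := by rw [hrs]
    rw [smul_smul, smul_smul, inv_mul_cancel₀ (ne_of_gt hr), one_smul] at h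
    rw [div_eq_mul_inv, mul_comm]; exact h
  -- support inequalities force r = s
  have hsub₂₁ : y₂ - y₁ = (r / s - 1) • (y₁ - x) := by
    rw [sub_smul, one_smul, ← ha₂]; abel
  have hsub₁₂ : y₁ - y₂ = (s / r - 1) • (y₂ - x) := by
    rw [sub_smul, one_smul, ← ha₁]; abel
  have hin₁ : ⟪y₁ - x, n y₁⟫ < 0 := by rw [real_inner_comm]; exact hill₁.1
  have hin₂ : ⟪y₂ - x, n y₂⟫ < 0 := by rw [real_inner_comm]; exact hill₂.1
  have hs₁ : (r / s - 1) * ⟪y₁ - x, n y₁⟫ ≤ 0 := by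
    have := hn_support y₁ hy₁ y₂ hy₂c
    rwa [hsub₂₁, real_inner_smul_left] at this
  have hs₂ : (s / r - 1) * ⟪y₂ - x, n y₂⟫ ≤ 0 := by
    have := hn_support y₂ hy₂ y₁ hy₁c
    rwa [hsub₁₂, real_inner_smul_left] at this
  have hge₁ : (1:ℝ) ≤ r / s := by
    by_contra h
    push_neg at h
    have : 0 < (r / s - 1) * ⟪y₁ - x, n y₁⟫ := mul_pos_of_neg_of_neg (by linarith) hin₁
    linarith
  have hge₂ : (1:ℝ) ≤ s / r := by
    by_contra h
    push_neg at h
    have : 0 < (s / r - 1) * ⟪y₂ - x, n y₂⟫ := mul_pos_of_neg_of_neg (by linarith) hin₂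
    linarith
  have hreq : r / s = 1 := by
    have h1 : s ≤ r := by
      have := (one_le_div hsp).mp hge₁; linarith
    have h2 : r ≤ s := by
      have := (one_le_div hr).mp hge₂; linarith
    rw [le_antisymm h2 h1, div_self (ne_of_gt hsp)]
  have : y₂ - x = y₁ - x := by rw [ha₂, hreq, one_smul]
  have := sub_left_injective this
  exact this.symm
end

section
/- Let D ⊂ ℝ^N be a bounded convex domain with smooth boundary, x, z ∉ closure(D), and suppose the illuminated side ∂D⁺_{x,z} is nonempty. Then the segment [x, z] does not meet closure(D), and ψ(y) = ‖x−y‖ + ‖y−z‖ > ‖x−z‖ for every y ∈ ∂D. -/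
open scoped RealInnerProductSpace
open Metric

/-- If the illuminated side `∂D⁺_{x,z}` is nonempty, then the segment `[x,z]` does not
meet `closure D`, and `ψ(y) = ‖x−y‖ + ‖y−z‖ > ‖x−z‖` for every boundary point `y`. -/
theorem segment_misses_obstacle_and_psi_gt_dist
    (N : ℕ) (D : Set (EuclideanSpace ℝ (Fin N)))
    (hD_open : IsOpen D) (hD_bdd : Bornology.IsBounded D)
    (hD_conv : Convex ℝ D)
    (n : EuclideanSpace ℝ (Fin N) → EuclideanSpace ℝ (Fin N))
    (hn_unit : ∀ y ∈ frontier D, ‖n y‖ = 1)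
    (hn_support : ∀ y ∈ frontier D, ∀ w ∈ closure D, ⟪w - y, n y⟫ ≤ 0)
    (x z : EuclideanSpace ℝ (Fin N))
    (hx : x ∉ closure D) (hz : z ∉ closure D)
    (hne : ∃ y ∈ frontier D, ⟪n y, y - x⟫ < 0 ∧ ⟪n y, y - z⟫ < 0) :
    segment ℝ x z ∩ closure D = ∅ ∧
      ∀ y ∈ frontier D, ‖x - z‖ < ‖x - y‖ + ‖y - z‖ := by
  obtain ⟨y₀, hy₀, hx0, hz0⟩ := hne
  have hxpos : (0:ℝ) < ⟪x - y₀, n y₀⟫ := by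
    have : ⟪n y₀, y₀ - x⟫ = -⟪x - y₀, n y₀⟫ := by
      rw [real_inner_comm]; rw [← inner_neg_left, neg_sub]
    linarith [hx0, this.symm ▸ hx0]
  have hzpos : (0:ℝ) < ⟪z - y₀, n y₀⟫ := by
    have : ⟪n y₀, y₀ - z⟫ = -⟪z - y₀, n y₀⟫ := by
      rw [real_inner_comm]; rw [← inner_neg_left, neg_sub]
    linarith [hz0, this.symm ▸ hz0]
  have hseg : segment ℝ x z ∩ closure D = ∅ := by
    ext p
    simp only [Set.mem_inter_iff, Set.mem_empty_iff_false, iff_false, not_and]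
    rintro ⟨a, b, ha, hb, hab, rfl⟩ hp
    have hle := hn_support y₀ hy₀ _ hp
    have hexp : ⟪a • x + b • z - y₀, n y₀⟫
        = a * ⟪x - y₀, n y₀⟫ + b * ⟪z - y₀, n y₀⟫ := by
      have : a • x + b • z - y₀ = a • (x - y₀) + b • (z - y₀) := by
        have h1 : a • y₀ + b • y₀ = y₀ := by rw [← add_smul, hab, one_smul]
        conv_lhs => rw [← h1]
        rw [smul_sub, smul_sub]; abel
      rw [this, inner_add_left, real_inner_smul_left, real_inner_smul_left]
    rw [hexp] at hle
    rcases eq_or_lt_of_le ha with h0 | h0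
    · rw [← h0] at hab; simp at hab
      nlinarith
    · nlinarith [mul_nonneg hb hzpos.le, mul_pos h0 hxpos]
  refine ⟨hseg, fun y hy => ?_⟩
  have hyc : y ∈ closure D := frontier_subset_closure hy
  have hynot : y ∉ segment ℝ x z := by
    intro hmem
    exact absurd (Set.mem_inter hmem hyc) (by rw [hseg]; exact id)
  have htri : ‖x - y‖ + ‖y - z‖ ≥ ‖x - z‖ := by
    have := norm_sub_le_norm_sub_add_norm_sub x y z
    linarith
  rcases lt_or_eq_of_le htri.le with h | h
  · linarith
  · exfalso
    apply hynot
    rw [mem_segment_iff_wbtw, ← dist_add_dist_eq_iff]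
    simpa [dist_eq_norm] using h.symm
end

section
/- Let s ∈ ℝ with s ≠ 0, let δ > 0 with δ|s| < π/2, and let k_j = k₀ + jδ for j = 0, 1, 2, …. Then it is impossible that sin(2k_j s) → 0 as j → ∞. In other words, limsup_{j→∞} |sin(2k_j s)| > 0. -/
open Filter

theorem aux_not_tendsto
    (k₀ δ s : ℝ) (hδ : 0 < δ) (hs : s ≠ 0)
    (h : δ * |s| < Real.pi / 2) :
    ¬ Tendsto (fun j : ℕ => Real.sin (2 * (k₀ + j * δ) * s)) atTop (nhds 0) := by
  intro hT
  set a : ℕ → ℝ := fun j => 2 * (k₀ + j * δ) * s with ha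
  set c : ℝ := 2 * δ * s with hc
  have hsinc : Real.sin c ≠ 0 := by
    rcases lt_or_gt_of_ne hs with hneg | hpos
    · have h1 : 2 * δ * s < 0 := by nlinarith
      have h2 : -Real.pi < 2 * δ * s := by
        rw [abs_of_neg hneg] at h; nlinarith
      have := Real.sin_pos_of_pos_of_lt_pi (x := -(2*δ*s)) (by linarith) (by linarith)
      rw [Real.sin_neg] at this
      simp only [hc]; linarith
    · have h1 : 0 < 2 * δ * s := by positivity
      have h2 : 2 * δ * s < Real.pi := by
        rw [abs_of_pos hpos] at h; nlinarith
      have := Real.sin_pos_of_pos_of_lt_pi h1 h2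
      simp only [hc]; linarith
  have hstep : ∀ j : ℕ, a (j + 1) = a j + c := by
    intro j; simp only [ha, hc]; push_cast; ring
  have hT1 : Tendsto (fun j : ℕ => Real.sin (a (j + 1))) atTop (nhds 0) :=
    hT.comp (tendsto_add_atTop_nat 1)
  have hT2 : Tendsto (fun j : ℕ => Real.sin (a (j + 1)) - Real.sin (a j) * Real.cos c)
      atTop (nhds 0) := by
    have := hT1.sub (hT.mul_const (Real.cos c))
    simpa using this
  have key : ∀ j : ℕ, Real.sin (a (j + 1)) - Real.sin (a j) * Real.cos c
      = Real.cos (a j) * Real.sin c := by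
    intro j; rw [hstep j, Real.sin_add]; ring
  have hcos : Tendsto (fun j : ℕ => Real.cos (a j)) atTop (nhds 0) := by
    have h3 : Tendsto (fun j : ℕ => Real.cos (a j) * Real.sin c) atTop (nhds 0) := by
      simpa only [key] using hT2
    have := h3.div_const (Real.sin c)
    simp only [zero_div] at this
    refine this.congr fun j => ?_
    field_simp
  have hone : Tendsto (fun j : ℕ => Real.sin (a j) ^ 2 + Real.cos (a j) ^ 2)
      atTop (nhds 0) := by
    have := (hT.mul hT).add (hcos.mul hcos)
    simp only [mul_zero, add_zero] at this
    refine this.congr fun j => by ring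
  have : Tendsto (fun _ : ℕ => (1 : ℝ)) atTop (nhds 0) := by
    refine hone.congr fun j => ?_
    rw [Real.sin_sq_add_cos_sq]
  have := tendsto_nhds_unique this tendsto_const_nhds
  norm_num at this

/-- For `s ≠ 0`, `δ > 0` with `δ|s| < π/2`, and `k_j = k₀ + jδ`, the sequence
`sin(2 k_j s)` cannot tend to `0`; in other words `limsup |sin(2 k_j s)| > 0`. -/
theorem sin_arith_progression_not_tendsto_zero
    (k₀ δ s : ℝ) (hk₀ : 0 < k₀) (hδ : 0 < δ) (hs : s ≠ 0)
    (h : δ * |s| < Real.pi / 2) :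
    ¬ Tendsto (fun j : ℕ => Real.sin (2 * (k₀ + j * δ) * s)) atTop (nhds 0) ∧
      0 < limsup (fun j : ℕ => |Real.sin (2 * (k₀ + j * δ) * s)|) atTop := by
  have hnt := aux_not_tendsto k₀ δ s hδ hs h
  refine ⟨hnt, ?_⟩
  set u : ℕ → ℝ := fun j => |Real.sin (2 * (k₀ + j * δ) * s)| with hu
  have hb : IsBoundedUnder (· ≤ ·) atTop u :=
    isBoundedUnder_of ⟨1, fun j => Real.abs_sin_le_one _⟩
  have hb' : IsBoundedUnder (· ≥ ·) atTop u :=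
    isBoundedUnder_of ⟨0, fun j => abs_nonneg _⟩
  have h0 : 0 ≤ limsup u atTop :=
    le_limsup_of_frequently_le (Frequently.of_forall fun j => abs_nonneg _) hb
  rcases h0.lt_or_eq with h0 | h0
  · exact h0
  exfalso
  apply hnt
  have hliminf : (0:ℝ) ≤ liminf u atTop :=
    le_liminf_of_le hb.isCoboundedUnder_ge (Eventually.of_forall fun j => abs_nonneg _)
  have hten : Tendsto u atTop (nhds 0) :=
    tendsto_of_le_liminf_of_limsup_le hliminf (le_of_eq h0.symm) hb hb'
  exact tendsto_zero_iff_abs_tendsto_zero _ |>.mpr hten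
end

section
/- Let a ≠ 0 be a real number, s ≠ 0, δ > 0 with δ|s| < π/2, and k_j = k₀ + jδ. Suppose f_j = a·sin(2k_j s) + ε_j where ε_j → 0 as j → ∞. Then f_j does not converge to 0. -/
open Filter Topology Real

lemma Real.not_tendsto_sin_arith_progression (x₀ Δ : ℝ) (hΔ : sin Δ ≠ 0) :
    ¬ Tendsto (fun j : ℕ => sin (x₀ + j * Δ)) atTop (𝓝 0) := by
  intro hsin
  set x : ℕ → ℝ := fun j => x₀ + j * Δ
  have hsin_succ : Tendsto (fun j => sin (x (j + 1))) atTop (𝓝 0) :=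
    hsin.comp (tendsto_add_atTop_nat 1)
  -- `sin (x + Δ) = sin x cos Δ + cos x sin Δ` can be solved for `cos x` since `sin Δ ≠ 0`.
  have hcos : Tendsto (fun j => cos (x j)) atTop (𝓝 0) := by
    have hcos_eq : ∀ j, cos (x j) = (sin (x (j + 1)) - sin (x j) * cos Δ) / sin Δ := by
      intro j
      have hstep : x (j + 1) = x j + Δ := by simp only [x]; push_cast; ring
      rw [hstep, sin_add]
      field_simp
      ring
    simpa [hcos_eq] using (hsin_succ.sub (hsin.mul_const (cos Δ))).div_const (sin Δ)
  have hone : Tendsto (fun _ : ℕ => (1 : ℝ)) atTop (𝓝 0) := by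
    simpa [x] using (hsin.pow 2).add (hcos.pow 2)
  exact one_ne_zero (tendsto_const_nhds_iff.mp hone)

lemma Real.sin_ne_zero_of_ne_zero_of_abs_lt_pi {x : ℝ} (h₀ : x ≠ 0) (hπ : |x| < π) :
    sin x ≠ 0 := by
  rw [abs_lt] at hπ
  exact fun h => h₀ ((sin_eq_zero_iff_of_lt_of_lt hπ.1 hπ.2).mp h)

/-- If `a ≠ 0`, `s ≠ 0`, `δ > 0` with `δ|s| < π/2`, `k_j = k₀ + jδ`, and
`f_j = a·sin(2 k_j s) + ε_j` with `ε_j → 0`, then `f_j` does not converge to `0`. -/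
theorem perturbed_sin_arith_progression_not_tendsto_zero
    (k₀ δ s a : ℝ) (ha : a ≠ 0) (hδ : 0 < δ) (hs : s ≠ 0)
    (h : δ * |s| < Real.pi / 2)
    (ε f : ℕ → ℝ) (hε : Tendsto ε atTop (nhds 0))
    (hf : ∀ j, f j = a * Real.sin (2 * (k₀ + j * δ) * s) + ε j) :
    ¬ Tendsto f atTop (nhds 0) := by
  intro hF
  have hstep : sin (2 * δ * s) ≠ 0 := by
    refine sin_ne_zero_of_ne_zero_of_abs_lt_pi (by positivity) ?_
    rw [abs_mul, abs_of_pos (by positivity : (0 : ℝ) < 2 * δ)]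
    linarith
  refine not_tendsto_sin_arith_progression (2 * k₀ * s) (2 * δ * s) hstep ?_
  have hsin_eq : ∀ j : ℕ, sin (2 * k₀ * s + j * (2 * δ * s)) = (f j - ε j) / a := by
    intro j
    rw [hf j, add_sub_cancel_right, mul_div_cancel_left₀ _ ha]
    ring_nf
  simpa [hsin_eq] using (hF.sub hε).div_const a
end

section
/- Let D ⊂ ℝ^N be a bounded convex domain with closure(D) ⊂ B_R = {z : ‖z‖ < R}, with smooth boundary. For each x ∈ ∂B_R let d(x) = dist(x, ∂D) and B_x = {z ∈ B_R : ‖z−x‖ < d(x)}. Then closure(D) = B_R \ ⋃_{x ∈ ∂B_R} B_x. -/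
/-!
A point `z ∈ closure D` lies in no `B_x`: the segment from `z` to `x ∉ closure D` crosses `∂D`,
so `d(x) ≤ ‖z - x‖`. Conversely, let `z ∈ B_R \ closure D` have nearest point `y` in the
closed convex set `closure D`. The obtuse-angle characterisation of `y` shows that `y` remains
the nearest point of `closure D` to every point of the ray from `y` through `z`; at the point `x`
where this ray leaves `B_R` we get `‖z - x‖ < ‖x - y‖ ≤ d(x)`.
-/

open Metric Set Filter
open scoped RealInnerProductSpace

theorem IsPreconnected.inter_frontier_nonempty {X : Type*} [TopologicalSpace X] {s t : Set X}
    (hs : IsPreconnected s) (hst : (s ∩ t).Nonempty) (hst' : (s \ t).Nonempty) :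
    (s ∩ frontier t).Nonempty := by
  by_contra! h
  have hcover : s ⊆ interior t ∪ (closure t)ᶜ := fun p hp => by
    by_cases hpt : p ∈ interior t
    · exact Or.inl hpt
    · exact Or.inr fun hpc => h.subset ⟨hp, hpc, hpt⟩
  obtain ⟨p, hps, hpt⟩ := hst
  obtain ⟨q, hqs, hqt⟩ := hst'
  obtain ⟨r, -, hri, hrc⟩ := hs _ _ isOpen_interior isClosed_closure.isOpen_compl hcover
    ⟨p, hps, (hcover hps).resolve_right (not_not.2 (subset_closure hpt))⟩
    ⟨q, hqs, (hcover hqs).resolve_left fun hqi => hqt (interior_subset hqi)⟩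
  exact hrc (subset_closure (interior_subset hri))

section Normed

variable {E : Type*} [NormedAddCommGroup E] [NormedSpace ℝ E]

theorem infDist_frontier_le_dist_of_mem_closure {s : Set E} {z x : E} (hz : z ∈ closure s)
    (hx : x ∉ closure s) : infDist x (frontier s) ≤ dist z x := by
  obtain ⟨w, hw, hwf⟩ := (convex_segment z x).isPreconnected.inter_frontier_nonempty
    ⟨z, left_mem_segment ℝ z x, hz⟩ ⟨x, right_mem_segment ℝ z x, hx⟩
  calc infDist x (frontier s) ≤ dist x w := infDist_le_dist_of_mem (frontier_closure_subset hwf)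
    _ ≤ dist x z := by
      simpa [dist_comm] using
        (convex_closedBall x (dist x z)).segment_subset (by simp [dist_comm]) (by simp) hw
    _ = dist z x := dist_comm x z

theorem exists_nonneg_norm_add_smul_eq {p v : E} {R : ℝ} (hp : ‖p‖ ≤ R) (hv : v ≠ 0) :
    ∃ t : ℝ, 0 ≤ t ∧ ‖p + t • v‖ = R := by
  have hcont : Continuous fun t : ℝ => ‖p + t • v‖ := by fun_prop
  have htop : Tendsto (fun t : ℝ => ‖p + t • v‖) atTop atTop := by
    refine tendsto_atTop_mono (fun t => ?_)
      (tendsto_atTop_add_const_right _ (-‖p‖) (tendsto_id.atTop_mul_const (norm_pos_iff.2 hv)))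
    have h : ‖t • v‖ ≤ ‖p + t • v‖ + ‖p‖ := by
      simpa using norm_le_norm_add_norm_sub' (t • v) (p + t • v)
    rw [norm_smul, Real.norm_eq_abs] at h
    have := mul_le_mul_of_nonneg_right (le_abs_self t) (norm_nonneg v)
    dsimp only [id]
    linarith
  obtain ⟨t, ht, htR⟩ :=
    intermediate_value_Ici (a := 0) hcont.continuousOn htop (by simpa using hp)
  exact ⟨t, ht, htR⟩

end Normed

section Inner

variable {E : Type*} [NormedAddCommGroup E] [InnerProductSpace ℝ E]

theorem norm_sub_le_norm_sub_of_inner_nonpos {x y w : E} (h : ⟪x - y, w - y⟫ ≤ 0) :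
    ‖x - y‖ ≤ ‖x - w‖ := by
  have hsq : ‖x - w‖ ^ 2 = ‖x - y‖ ^ 2 - 2 * ⟪x - y, w - y⟫ + ‖w - y‖ ^ 2 := by
    rw [← norm_sub_sq_real, sub_sub_sub_cancel_right]
  refine (pow_le_pow_iff_left₀ (norm_nonneg _) (norm_nonneg _) two_ne_zero).1 ?_
  nlinarith [sq_nonneg ‖w - y‖]

theorem exists_mem_sphere_dist_lt_infDist_frontier [CompleteSpace E] {s : Set E}
    (hs : Convex ℝ s) (hne : s.Nonempty) {z : E} (hz : z ∉ closure s) {R : ℝ} (hzR : ‖z‖ ≤ R) :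
    ∃ x ∈ sphere (0 : E) R, dist z x < infDist x (frontier s) := by
  obtain ⟨y, hy, hyz⟩ :=
    exists_norm_eq_iInf_of_complete_convex hne.closure isClosed_closure.isComplete hs.closure z
  have hproj := (norm_eq_iInf_iff_real_inner_le_zero hs.closure hy).1 hyz
  have hzy : z - y ≠ 0 := sub_ne_zero.2 fun h => hz (h ▸ hy)
  obtain ⟨t, ht, hxR⟩ := exists_nonneg_norm_add_smul_eq hzR hzy
  set x := z + t • (z - y)
  have hxy : x - y = (1 + t) • (z - y) := by module
  have hxz : x - z = t • (z - y) := by module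
  have hfront : (frontier s).Nonempty := nonempty_frontier_iff.2 ⟨hne, fun h => hz (by simp [h])⟩
  have hnearest : ∀ w ∈ frontier s, dist x y ≤ dist x w := fun w hw => by
    rw [dist_eq_norm, dist_eq_norm]
    refine norm_sub_le_norm_sub_of_inner_nonpos ?_
    rw [hxy, real_inner_smul_left]
    exact mul_nonpos_of_nonneg_of_nonpos (by linarith) (hproj w (frontier_subset_closure hw))
  refine ⟨x, by simpa using hxR, ?_⟩
  calc dist z x = t * ‖z - y‖ := by
        rw [dist_comm, dist_eq_norm, hxz, norm_smul, Real.norm_of_nonneg ht]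
    _ < (1 + t) * ‖z - y‖ := mul_lt_mul_of_pos_right (by linarith) (norm_pos_iff.2 hzy)
    _ = dist x y := by rw [dist_eq_norm, hxy, norm_smul, Real.norm_of_nonneg (by linarith)]
    _ ≤ infDist x (frontier s) := (le_infDist hfront).2 hnearest

end Inner

theorem obstacle_recovered_from_boundary_distances_general
    (N : ℕ) (R : ℝ)
    (D : Set (EuclideanSpace ℝ (Fin N)))
    (hD_ne : D.Nonempty)
    (hD_conv : Convex ℝ D)
    (hD_sub : closure D ⊆ ball (0 : EuclideanSpace ℝ (Fin N)) R) :
    closure D =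
      ball (0 : EuclideanSpace ℝ (Fin N)) R \
        ⋃ x ∈ sphere (0 : EuclideanSpace ℝ (Fin N)) R,
          {z ∈ ball (0 : EuclideanSpace ℝ (Fin N)) R |
            dist z x < infDist x (frontier D)} := by
  ext z
  constructor
  · intro hz
    refine ⟨hD_sub hz, ?_⟩
    simp only [mem_iUnion]
    rintro ⟨x, hx, -, hlt⟩
    have hxD : x ∉ closure D := fun h =>
      (mem_ball_zero_iff.1 (hD_sub h)).ne (mem_sphere_zero_iff_norm.1 hx)
    exact (infDist_frontier_le_dist_of_mem_closure hz hxD).not_gt hlt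
  · rintro ⟨hzR, hz_far⟩
    by_contra hz
    obtain ⟨x, hx, hlt⟩ := exists_mem_sphere_dist_lt_infDist_frontier hD_conv hD_ne hz
      (mem_ball_zero_iff.1 hzR).le
    exact hz_far (mem_iUnion₂.2 ⟨x, hx, hzR, hlt⟩)

/-- A bounded convex domain `D` with `closure D ⊂ B_R` is recovered from the distances
`d(x) = dist(x, ∂D)` for `x` on the sphere `Γ_R = ∂B_R`:
`closure D = B_R \ ⋃_{x ∈ ∂B_R} B_x` where `B_x = {z ∈ B_R : ‖z−x‖ < d(x)}`. -/
theorem obstacle_recovered_from_boundary_distances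
    (N : ℕ) (R : ℝ) (hR : 0 < R)
    (D : Set (EuclideanSpace ℝ (Fin N)))
    (hD_open : IsOpen D) (hD_ne : D.Nonempty)
    (hD_conv : Convex ℝ D)
    (hD_sub : closure D ⊆ ball (0 : EuclideanSpace ℝ (Fin N)) R) :
    closure D =
      ball (0 : EuclideanSpace ℝ (Fin N)) R \
        ⋃ x ∈ sphere (0 : EuclideanSpace ℝ (Fin N)) R,
          {z ∈ ball (0 : EuclideanSpace ℝ (Fin N)) R |
            dist z x < infDist x (frontier D)} :=
  obstacle_recovered_from_boundary_distances_general N R D hD_ne hD_conv hD_sub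
end
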